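/- Let R be any (possibly noncommutative) ring with 1 ≠ 0, let n ≥ 3, and let W = M[R_n, R_{n-1}, C_n] be the subring (without identity) of M_n(R) consisting of matrices whose n-th row, (n−1)-th row, and n-th column are zero. Then W is the intersection of two subrings of M_n(R), each of which has a multiplicative identity element, yet W itself has no right identity (and in particular no identity element). -/
import Mathlib


/-- Over any ring `R` with `1 ≠ 0` and `n ≥ 3`, the subring
`W = M[Rₙ, Rₙ₋₁, Cₙ]` of `Mₙ(R)` is the intersection of two subrings each
having a multiplicative identity, yet `W` has no right identity. -/
theorem stmt18 (R : Type*) [Ring R] [Nontrivial R] (n : ℕ) (hn : 3 ≤ n)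
    (W : NonUnitalSubring (Matrix (Fin n) (Fin n) R))
    (hW : ∀ A : Matrix (Fin n) (Fin n) R,
      A ∈ W ↔ (∀ j, A ⟨n - 1, by omega⟩ j = 0) ∧ (∀ j, A ⟨n - 2, by omega⟩ j = 0) ∧
        (∀ i, A i ⟨n - 1, by omega⟩ = 0)) :
    (∃ U V : NonUnitalSubring (Matrix (Fin n) (Fin n) R),
        (∃ e ∈ U, ∀ u ∈ U, e * u = u ∧ u * e = u) ∧
        (∃ e ∈ V, ∀ u ∈ V, e * u = u ∧ u * e = u) ∧
        W = U ⊓ V) ∧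
    (¬ ∃ e ∈ W, ∀ w ∈ W, w * e = w) := by
  classical
  have h1 : n - 1 < n := by omega
  have h2 : n - 2 < n := by omega
  have h0 : 0 < n := by omega
  set i1 : Fin n := ⟨n - 1, h1⟩ with hi1
  set i2 : Fin n := ⟨n - 2, h2⟩ with hi2
  set i0 : Fin n := ⟨0, h0⟩ with hi0
  have hne : i2 ≠ i1 := by
    simp only [hi1, hi2, Fin.mk.injEq, ne_eq]
    omega
  have hne0 : i0 ≠ i1 := by
    simp only [hi1, hi0, Fin.mk.injEq, ne_eq]
    omega
  have hne0' : i0 ≠ i2 := by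
    simp only [hi2, hi0, Fin.mk.injEq, ne_eq]
    omega
  have hW' : ∀ A : Matrix (Fin n) (Fin n) R,
      A ∈ W ↔ (∀ j, A i1 j = 0) ∧ (∀ j, A i2 j = 0) ∧ (∀ i, A i i1 = 0) := hW
  constructor
  · -- construct U and V
    refine ⟨{ carrier := {A | (∀ i, A i i1 = 0) ∧ (∀ j, A i2 j = A i1 j)}
              zero_mem' := by simp
              add_mem' := by
                rintro a b ⟨ha1, ha2⟩ ⟨hb1, hb2⟩
                exact ⟨fun i => by simp [Matrix.add_apply, ha1 i, hb1 i],
                       fun j => by simp [Matrix.add_apply, ha2 j, hb2 j]⟩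
              neg_mem' := by
                rintro a ⟨ha1, ha2⟩
                exact ⟨fun i => by simp [Matrix.neg_apply, ha1 i],
                       fun j => by simp [Matrix.neg_apply, ha2 j]⟩
              mul_mem' := by
                rintro a b ⟨ha1, ha2⟩ ⟨hb1, hb2⟩
                constructor
                · intro i
                  simp [Matrix.mul_apply, hb1]
                · intro j
                  simp only [Matrix.mul_apply]
                  exact Finset.sum_congr rfl fun k _ => by rw [ha2 k] },
            { carrier := {A | (∀ j, A i1 j = 0) ∧ (∀ i, A i i1 = 0)}
              zero_mem' := by simp
              add_mem' := by
                rintro a b ⟨ha1, ha2⟩ ⟨hb1, hb2⟩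
                exact ⟨fun j => by simp [Matrix.add_apply, ha1 j, hb1 j],
                       fun i => by simp [Matrix.add_apply, ha2 i, hb2 i]⟩
              neg_mem' := by
                rintro a ⟨ha1, ha2⟩
                exact ⟨fun j => by simp [Matrix.neg_apply, ha1 j],
                       fun i => by simp [Matrix.neg_apply, ha2 i]⟩
              mul_mem' := by
                rintro a b ⟨ha1, ha2⟩ ⟨hb1, hb2⟩
                constructor
                · intro j
                  simp [Matrix.mul_apply, ha1]
                · intro i
                  simp [Matrix.mul_apply, hb2] },
            ?_, ?_, ?_⟩
    · -- identity of U
      refine ⟨Matrix.of fun i j =>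
          if i = i1 then (if j = i2 then (1 : R) else 0) else (if i = j then 1 else 0),
        ⟨?_, ?_⟩, ?_⟩
      · intro i
        by_cases h : i = i1
        · simp [h, Ne.symm hne]
        · simp [h]
      · intro j
        by_cases h : j = i2
        · subst h
          simp [hne]
        · have h' : i2 ≠ j := fun hh => h hh.symm
          simp [hne, h, h']
      · rintro u ⟨hu1, hu2⟩
        constructor
        · ext i j
          simp only [Matrix.mul_apply, Matrix.of_apply]
          by_cases h : i = i1
          · subst h
            rw [show (∑ k, (if (i1 : Fin n) = i1 then (if k = i2 then (1:R) else 0)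
                else (if i1 = k then 1 else 0)) * u k j) =
                ∑ k, (if k = i2 then u k j else 0) from
              Finset.sum_congr rfl fun k _ => by by_cases hk : k = i2 <;> simp [hk]]
            simp [← hu2 j]
          · rw [show (∑ k, (if i = i1 then (if k = i2 then (1:R) else 0)
                else (if i = k then 1 else 0)) * u k j) =
                ∑ k, (if i = k then u k j else 0) from
              Finset.sum_congr rfl fun k _ => by
                by_cases hk : i = k
                · subst hk
                  simp [h]
                · simp [h, hk]]
            simp
        · ext i j
          simp only [Matrix.mul_apply, Matrix.of_apply]
          by_cases h : j = i1
          · subst h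
            rw [show (∑ k, u i k * (if k = i1 then (if (i1:Fin n) = i2 then (1:R) else 0)
                else (if k = i1 then 1 else 0))) = ∑ k, (0:R) from
              Finset.sum_congr rfl fun k _ => by
                by_cases hk : k = i1 <;> simp [hk, Ne.symm hne]]
            simp [hu1 i]
          · rw [show (∑ k, u i k * (if k = i1 then (if j = i2 then (1:R) else 0)
                else (if k = j then 1 else 0))) =
                ∑ k, (if k = j then u i k else 0) from
              Finset.sum_congr rfl fun k _ => by
                by_cases hk : k = i1
                · subst hk
                  simp [hu1 i]
                · by_cases hkj : k = j
                  · subst hkj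
                    simp [hk]
                  · simp [hk, hkj]]
            simp
    · -- identity of V
      refine ⟨Matrix.of fun i j => if i = i1 then 0 else (if i = j then (1:R) else 0),
        ⟨?_, ?_⟩, ?_⟩
      · intro j
        simp
      · intro i
        by_cases h : i = i1
        · simp [h]
        · simp [h]
      · rintro u ⟨hu1, hu2⟩
        constructor
        · ext i j
          simp only [Matrix.mul_apply, Matrix.of_apply]
          by_cases h : i = i1
          · subst h
            simp [hu1 j]
          · rw [show (∑ k, (if i = i1 then (0:R) else (if i = k then 1 else 0)) * u k j) =
                ∑ k, (if i = k then u k j else 0) from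
              Finset.sum_congr rfl fun k _ => by
                by_cases hk : i = k
                · subst hk
                  simp [h]
                · simp [h, hk]]
            simp
        · ext i j
          simp only [Matrix.mul_apply, Matrix.of_apply]
          by_cases h : j = i1
          · subst h
            rw [show (∑ k, u i k * (if k = i1 then (0:R) else (if k = i1 then 1 else 0))) =
                ∑ k, (0:R) from
              Finset.sum_congr rfl fun k _ => by by_cases hk : k = i1 <;> simp [hk]]
            simp [hu2 i]
          · rw [show (∑ k, u i k * (if k = i1 then (0:R) else (if k = j then 1 else 0))) =
                ∑ k, (if k = j then u i k else 0) from
              Finset.sum_congr rfl fun k _ => by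
                by_cases hk : k = i1
                · subst hk
                  simp [Ne.symm h, hu2 i]
                · by_cases hkj : k = j
                  · subst hkj
                    simp [hk]
                  · simp [hk, hkj]]
            simp
    · -- W = U ⊓ V
      ext A
      rw [hW' A]
      constructor
      · rintro ⟨h1', h2', h3'⟩
        exact ⟨⟨h3', fun j => by rw [h1' j, h2' j]⟩, ⟨h1', h3'⟩⟩
      · rintro ⟨⟨hc, hr⟩, ⟨hr1, _⟩⟩
        exact ⟨hr1, fun j => by rw [hr j, hr1 j], hc⟩
  · -- no right identity
    rintro ⟨e, heW, he⟩
    obtain ⟨he1, he2, -⟩ := (hW' e).mp heW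
    set w : Matrix (Fin n) (Fin n) R :=
      Matrix.of fun i j => if i = i0 ∧ j = i2 then (1:R) else 0 with hw
    have hwW : w ∈ W := by
      rw [hW' w]
      refine ⟨fun j => ?_, fun j => ?_, fun i => ?_⟩ <;>
        simp [hw, Ne.symm hne0, Ne.symm hne0', hne, hne.symm]
    have := congrFun (congrFun (he w hwW) i0) i2
    simp only [Matrix.mul_apply, hw, Matrix.of_apply] at this
    simp only [true_and, and_true, if_true, ite_mul, one_mul, zero_mul,
      Finset.sum_ite_eq', Finset.mem_univ] at this
    rw [he2 i2] at this
    exact one_ne_zero this.symm
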